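/- Let f : {0,1}^n → {0,1}. Then I[f] ≥ 2·E[f]·log₂(1/E[f]), where E[f] is the expectation of f under the uniform measure on {0,1}^n and I[f] = Σ_{i=1}^n Pr_x[f(x) ≠ f(x⊕e_i)] is the total influence (uniform measure), with the convention 0·log₂(1/0) = 0. -/
import Mathlib


open Finset

/-- The `p`-biased weight of a point of the discrete cube. -/
noncomputable def biasedWeight (p : ℝ) {n : ℕ} (x : Fin n → Bool) : ℝ :=
  ∏ i, if x i then p else 1 - p

/-- The `p`-biased measure (expectation) of a Boolean function. -/
noncomputable def biasedMeasure (p : ℝ) {n : ℕ} (f : (Fin n → Bool) → Bool) : ℝ :=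
  ∑ x : Fin n → Bool, biasedWeight p x * (if f x then 1 else 0)

/-- The `p`-biased influence of coordinate `i` on a Boolean function. -/
noncomputable def influence (p : ℝ) {n : ℕ} (f : (Fin n → Bool) → Bool) (i : Fin n) : ℝ :=
  ∑ x : Fin n → Bool,
    biasedWeight p x * (if f x ≠ f (Function.update x i (!x i)) then 1 else 0)

/-- The total `p`-biased influence of a Boolean function. -/
noncomputable def totalInfluence (p : ℝ) {n : ℕ} (f : (Fin n → Bool) → Bool) : ℝ :=
  ∑ i, influence p f i

lemma bw_half {n : ℕ} (x : Fin n → Bool) : biasedWeight (1/2) x = (1/2)^n := by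
  unfold biasedWeight
  rw [Finset.prod_congr rfl (fun i _ => by split <;> norm_num : ∀ i ∈ univ, (if x i then (1:ℝ)/2 else 1 - 1/2) = 1/2)]
  simp

lemma sum_cons {n : ℕ} (g : (Fin (n+1) → Bool) → ℝ) :
    ∑ x : Fin (n+1) → Bool, g x
      = ∑ y : Fin n → Bool, g (Fin.cons false y) + ∑ y : Fin n → Bool, g (Fin.cons true y) := by
  rw [← (Fin.consEquiv (fun _ => Bool)).sum_comp g, Fintype.sum_prod_type, Fintype.sum_bool]
  simp [Fin.consEquiv]
  ring

lemma measure_split {n : ℕ} (f : (Fin (n+1) → Bool) → Bool) :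
    biasedMeasure (1/2) f = (biasedMeasure (1/2) (fun y => f (Fin.cons false y))
      + biasedMeasure (1/2) (fun y => f (Fin.cons true y))) / 2 := by
  unfold biasedMeasure
  simp only [bw_half]
  rw [sum_cons (fun x => (1/2:ℝ)^(n+1) * (if f x then 1 else 0))]
  rw [Finset.sum_congr rfl (fun y _ => by rw [pow_succ]; ring :
    ∀ y ∈ univ, ((1/2:ℝ)^(n+1) * (if f (Fin.cons false y) then 1 else 0))
      = ((1/2:ℝ)^n * (if f (Fin.cons false y) then 1 else 0))/2)]
  rw [Finset.sum_congr rfl (fun y _ => by rw [pow_succ]; ring :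
    ∀ y ∈ univ, ((1/2:ℝ)^(n+1) * (if f (Fin.cons true y) then 1 else 0))
      = ((1/2:ℝ)^n * (if f (Fin.cons true y) then 1 else 0))/2)]
  rw [← Finset.sum_div, ← Finset.sum_div]
  ring

lemma influence_zero {n : ℕ} (f : (Fin (n+1) → Bool) → Bool) :
    influence (1/2) f 0 = ∑ y : Fin n → Bool,
      (1/2:ℝ)^n * (if f (Fin.cons false y) ≠ f (Fin.cons true y) then 1 else 0) := by
  unfold influence
  simp only [bw_half]
  rw [sum_cons (fun x => (1/2:ℝ)^(n+1) * (if f x ≠ f (Function.update x 0 (!x 0)) then 1 else 0))]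
  simp only [Fin.cons_zero, Fin.update_cons_zero, Bool.not_false, Bool.not_true]
  rw [← Finset.sum_add_distrib]
  apply Finset.sum_congr rfl
  intro y _
  have h : (if f (Fin.cons true y) ≠ f (Fin.cons false y) then (1:ℝ) else 0)
      = (if f (Fin.cons false y) ≠ f (Fin.cons true y) then (1:ℝ) else 0) := by
    cases hf : f (Fin.cons false y) <;> cases ht : f (Fin.cons true y) <;> simp [hf, ht]
  rw [h, pow_succ]; ring

lemma influence_succ {n : ℕ} (f : (Fin (n+1) → Bool) → Bool) (i : Fin n) :
    influence (1/2) f i.succ = (influence (1/2) (fun y => f (Fin.cons false y)) i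
      + influence (1/2) (fun y => f (Fin.cons true y)) i) / 2 := by
  unfold influence
  simp only [bw_half]
  rw [sum_cons (fun x => (1/2:ℝ)^(n+1) * (if f x ≠ f (Function.update x i.succ (!x i.succ)) then 1 else 0))]
  simp only [Fin.cons_succ, ← Fin.cons_update]
  rw [← Finset.sum_add_distrib, ← Finset.sum_add_distrib, Finset.sum_div]
  apply Finset.sum_congr rfl
  intro y _
  rw [pow_succ]; ring

lemma logb_one_add_ge (t : ℝ) (h0 : 0 ≤ t) (h1 : t ≤ 1) : t ≤ Real.logb 2 (1 + t) := by
  have hlog2 : (0:ℝ) < Real.log 2 := Real.log_pos one_lt_two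
  have hexp : Real.exp (t * Real.log 2) ≤ 1 + t := by
    have h := convexOn_exp.2 (Set.mem_univ (0:ℝ)) (Set.mem_univ (Real.log 2))
      (by linarith : (0:ℝ) ≤ 1 - t) h0 (by ring)
    simp only [smul_eq_mul, mul_zero, zero_add, Real.exp_zero, Real.exp_log two_pos] at h
    linarith
  have h2 := (Real.le_log_iff_exp_le (by linarith : (0:ℝ) < 1 + t)).2 hexp
  rw [Real.logb, le_div_iff₀ hlog2]
  linarith

lemma key_ineq (a b : ℝ) (ha : 0 ≤ a) (hab : a ≤ b) :
    2 * ((a+b)/2) * Real.logb 2 (1 / ((a+b)/2)) ≤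
      a * Real.logb 2 (1/a) + b * Real.logb 2 (1/b) + (b - a) := by
  rcases eq_or_lt_of_le ha with rfl | ha
  · rcases eq_or_lt_of_le hab with rfl | hb
    · norm_num
    · have hb' : b ≠ 0 := ne_of_gt hb
      rw [show (0+b)/2 = b/2 by ring, one_div, one_div, Real.logb_inv, Real.logb_inv,
        Real.logb_div hb' two_ne_zero, Real.logb_self_eq_one one_lt_two]
      ring_nf
      rw [Real.logb_inv]
      ring_nf
      linarith
  · have hb : 0 < b := lt_of_lt_of_le ha hab
    have hs : 0 < a + b := by linarith
    set La := Real.logb 2 a with hLa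
    set Lb := Real.logb 2 b with hLb
    set Ls := Real.logb 2 (a+b) with hLs
    have f1 : 1 ≤ Ls - La := by
      have h2 : Real.logb 2 (2*a) ≤ Ls :=
        Real.logb_le_logb_of_le one_lt_two (by linarith) (by linarith)
      rw [Real.logb_mul two_ne_zero (ne_of_gt ha), Real.logb_self_eq_one one_lt_two] at h2
      linarith
    have f2 : a ≤ b * (Ls - Lb) := by
      have ht := logb_one_add_ge (a/b) (by positivity) (by rw [div_le_one hb]; exact hab)
      have heq : Real.logb 2 (1 + a/b) = Ls - Lb := by
        rw [show 1 + a/b = (a+b)/b by field_simp; ring,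
          Real.logb_div (ne_of_gt hs) (ne_of_gt hb)]
      rw [heq] at ht
      calc a = b * (a/b) := by field_simp
        _ ≤ b * (Ls - Lb) := mul_le_mul_of_nonneg_left ht (le_of_lt hb)
    have e1 : Real.logb 2 (1/a) = -La := by rw [one_div, Real.logb_inv]
    have e2 : Real.logb 2 (1/b) = -Lb := by rw [one_div, Real.logb_inv]
    have e3 : Real.logb 2 (1/((a+b)/2)) = 1 - Ls := by
      rw [one_div, Real.logb_inv, Real.logb_div (ne_of_gt hs) two_ne_zero,
        Real.logb_self_eq_one one_lt_two]; ring
    rw [e1, e2, e3]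
    nlinarith [f1, f2]

lemma measure_nonneg {n : ℕ} (f : (Fin n → Bool) → Bool) : 0 ≤ biasedMeasure (1/2) f := by
  apply Finset.sum_nonneg
  intro x _
  rw [bw_half]
  positivity

lemma diff_bound {n : ℕ} (f : (Fin (n+1) → Bool) → Bool) :
    |biasedMeasure (1/2) (fun y => f (Fin.cons false y))
      - biasedMeasure (1/2) (fun y => f (Fin.cons true y))| ≤ influence (1/2) f 0 := by
  rw [influence_zero]
  unfold biasedMeasure
  simp only [bw_half]
  rw [← Finset.sum_sub_distrib]
  calc |∑ y : Fin n → Bool, ((1/2:ℝ)^n * (if f (Fin.cons false y) then 1 else 0)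
          - (1/2:ℝ)^n * (if f (Fin.cons true y) then 1 else 0))|
      ≤ ∑ y : Fin n → Bool, |(1/2:ℝ)^n * (if f (Fin.cons false y) then 1 else 0)
          - (1/2:ℝ)^n * (if f (Fin.cons true y) then 1 else 0)| :=
        Finset.abs_sum_le_sum_abs _ _
    _ ≤ ∑ y : Fin n → Bool,
          (1/2:ℝ)^n * (if f (Fin.cons false y) ≠ f (Fin.cons true y) then 1 else 0) := by
        apply Finset.sum_le_sum
        intro y _
        have hw : (0:ℝ) ≤ (1/2)^n := by positivity
        cases hf : f (Fin.cons false y) <;> cases ht : f (Fin.cons true y) <;>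
          simp [hf, ht, abs_of_nonneg (show (0:ℝ) ≤ ((2:ℝ)^n)⁻¹ by positivity)]

theorem weak_edge_isoperimetric_inequality (n : ℕ) (f : (Fin n → Bool) → Bool) :
    totalInfluence (1/2) f ≥
      2 * biasedMeasure (1/2) f * Real.logb 2 (1 / biasedMeasure (1/2) f) := by
  induction n with
  | zero =>
    have hI : totalInfluence (1/2) f = 0 := by
      unfold totalInfluence
      simp
    have hμ : biasedMeasure (1/2) f = if f default then 1 else 0 := by
      unfold biasedMeasure biasedWeight
      rw [Fintype.sum_unique]
      simp
      congr 2
      exact congrArg f (Subsingleton.elim _ _)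
    rw [hI, hμ]
    cases hf : f default <;> simp
  | succ n ih =>
    set g0 : (Fin n → Bool) → Bool := fun y => f (Fin.cons false y) with hg0
    set g1 : (Fin n → Bool) → Bool := fun y => f (Fin.cons true y) with hg1
    have h0 := ih g0
    have h1 := ih g1
    have hm0 := measure_nonneg g0
    have hm1 := measure_nonneg g1
    set μ0 := biasedMeasure (1/2) g0
    set μ1 := biasedMeasure (1/2) g1
    have hsplit : totalInfluence (1/2) f = influence (1/2) f 0
        + (totalInfluence (1/2) g0 + totalInfluence (1/2) g1) / 2 := by
      unfold totalInfluence
      rw [Fin.sum_univ_succ]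
      congr 1
      rw [Finset.sum_congr rfl (fun i _ => influence_succ f i), ← Finset.sum_div,
        Finset.sum_add_distrib]
    have hD := diff_bound f
    have hμ : biasedMeasure (1/2) f = (μ0 + μ1) / 2 := measure_split f
    rw [hμ, hsplit]
    rcases le_total μ0 μ1 with h | h
    · have hkey := key_ineq μ0 μ1 hm0 h
      rw [abs_of_nonpos (by linarith)] at hD
      linarith
    · have hkey := key_ineq μ1 μ0 hm1 h
      rw [abs_of_nonneg (by linarith)] at hD
      rw [show μ0 + μ1 = μ1 + μ0 by ring]
      linarith
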